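/- Let G be a graph on n ≥ 6 vertices and k = ⌈n/2⌉. If Σ_{v∈V(G)} 2^{−deg(v)−1} ≤ 1/(n+2), then the domination sequence d_0(G), …, d_n(G) is unimodal with mode k; i.e., d_j(G) is nondecreasing for j ≤ k and nonincreasing for j ≥ k. -/

import Mathlib

open Finset

/-- The closed neighborhood of a vertex as a `Finset`. -/
def closedNbhd {V : Type*} [Fintype V] [DecidableEq V] (G : SimpleGraph V)
    [DecidableRel G.Adj] (v : V) : Finset V :=
  insert v (G.neighborFinset v)

/-- The number of dominating sets of size `k`. -/
def domCount {V : Type*} [Fintype V] [DecidableEq V] (G : SimpleGraph V)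
    [DecidableRel G.Adj] (k : ℕ) : ℕ :=
  ((univ.powersetCard k).filter (fun S : Finset V => ∀ v : V, ∃ u ∈ S, u ∈ closedNbhd G v)).card

/-! Dominating sets form an up-set, so the upward local LYM inequality gives
`d_j (n - j) ≤ d_{j+1} (j + 1)`, hence `d_j ≤ d_{j+1}` while `2j + 1 ≤ n`.
For `n ≤ 2j`, a union bound over the vertices whose closed neighbourhood a `j`-set avoids,
with `2^m C(n-m, j) ≤ C(n, j)` at `m = deg v + 1`, gives `d_j ≥ C(n,j) (1 - σ)` where
`σ = Σ_v 2^{-deg v - 1}`, and `C(n,j) (1 - σ) ≥ C(n,j) (n+1)/(n+2) ≥ C(n,j+1) ≥ d_{j+1}`. -/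

open scoped FinsetFamily

namespace Nat

theorem two_mul_choose_pred_le {a j : ℕ} (ha : 0 < a) (haj : a ≤ 2 * j) :
    2 * (a - 1).choose j ≤ a.choose j := by
  have key := choose_mul_succ_eq (a - 1) j
  rw [Nat.sub_add_cancel ha] at key
  refine Nat.le_of_mul_le_mul_right ?_ ha
  calc 2 * (a - 1).choose j * a = a.choose j * (2 * (a - j)) := by rw [mul_assoc, key]; ring
    _ ≤ a.choose j * a := Nat.mul_le_mul_left _ (by omega)

theorem two_pow_mul_choose_sub_le {n j m : ℕ} (hm : m ≤ n) (hn : n ≤ 2 * j) :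
    2 ^ m * (n - m).choose j ≤ n.choose j := by
  induction m with
  | zero => simp
  | succ m ih =>
    calc 2 ^ (m + 1) * (n - (m + 1)).choose j = 2 ^ m * (2 * (n - m - 1).choose j) := by
          rw [Nat.sub_add_eq]; ring
      _ ≤ 2 ^ m * (n - m).choose j :=
          Nat.mul_le_mul_left _ (two_mul_choose_pred_le (by omega) (by omega))
      _ ≤ n.choose j := ih (by omega)

theorem add_two_mul_choose_succ_le {n j : ℕ} (hn : n ≤ 2 * j) :
    (n + 2) * n.choose (j + 1) ≤ (n + 1) * n.choose j := by
  have key := choose_succ_right_eq n j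
  have hlin : (n + 2) * (n - j) ≤ (n + 1) * (j + 1) := by
    rcases le_or_gt n j with h | h
    · simp [Nat.sub_eq_zero_of_le h]
    · obtain ⟨t, rfl⟩ := Nat.exists_eq_add_of_lt h
      rw [show j + t + 1 - j = t + 1 by omega]
      nlinarith
  refine Nat.le_of_mul_le_mul_right ?_ j.succ_pos
  calc (n + 2) * n.choose (j + 1) * (j + 1) = n.choose j * ((n + 2) * (n - j)) := by
        rw [mul_assoc, key]; ring
    _ ≤ n.choose j * ((n + 1) * (j + 1)) := Nat.mul_le_mul_left _ hlin
    _ = (n + 1) * n.choose j * (j + 1) := by ring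

end Nat

namespace Finset

variable {α : Type*} [DecidableEq α] [Fintype α] {𝒜 : Finset (Finset α)} {r : ℕ}

theorem card_mul_le_card_upShadow_mul (h𝒜 : (𝒜 : Set (Finset α)).Sized r) :
    #𝒜 * (Fintype.card α - r) ≤ #(∂⁺ 𝒜) * (r + 1) := by
  rcases le_or_gt r (Fintype.card α) with hr | hr
  · have := local_lubell_yamamoto_meshalkin_inequality_mul h𝒜.compls
    rwa [shadow_compls, card_compls, card_compls, Nat.sub_sub_self hr] at this
  · simp [Nat.sub_eq_zero_of_le hr.le]

theorem upShadow_slice_subset (h𝒜 : IsUpperSet (𝒜 : Set (Finset α))) (r : ℕ) :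
    ∂⁺ (𝒜 # r) ⊆ 𝒜 # (r + 1) := by
  intro t ht
  obtain ⟨s, hs, hst, hcard⟩ := mem_upShadow_iff_exists_mem_card_add_one.1 ht
  rw [mem_slice] at hs ⊢
  exact ⟨h𝒜 hst hs.1, by rw [hcard, hs.2]⟩

theorem card_slice_mul_le_card_slice_succ_mul (h𝒜 : IsUpperSet (𝒜 : Set (Finset α)))
    (r : ℕ) :
    #(𝒜 # r) * (Fintype.card α - r) ≤ #(𝒜 # (r + 1)) * (r + 1) :=
  (card_mul_le_card_upShadow_mul (sized_slice)).trans <|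
    Nat.mul_le_mul_right _ (card_le_card (upShadow_slice_subset h𝒜 r))

end Finset

section Domination

variable {V : Type*} [Fintype V] (G : SimpleGraph V) [DecidableRel G.Adj]

theorem choose_sub_degree_le {j : ℕ} (hj : Fintype.card V ≤ 2 * j) (v : V) :
    ((Fintype.card V - 1 - G.degree v).choose j : ℚ) ≤
      (Fintype.card V).choose j * 2 ^ (-(G.degree v : ℤ) - 1) := by
  have hnat := Nat.two_pow_mul_choose_sub_le (m := G.degree v + 1)
    (G.degree_lt_card_verts v) hj
  rw [Nat.sub_add_eq, Nat.sub_right_comm] at hnat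
  rw [show -(G.degree v : ℤ) - 1 = -((G.degree v + 1 : ℕ) : ℤ) by push_cast; ring, zpow_neg,
    zpow_natCast, ← div_eq_mul_inv, le_div_iff₀ (by positivity), mul_comm]
  exact_mod_cast hnat

variable [DecidableEq V]

def dominatingSets : Finset (Finset V) :=
  {S | ∀ v : V, ∃ u ∈ S, u ∈ closedNbhd G v}

theorem isUpperSet_dominatingSets : IsUpperSet (dominatingSets G : Set (Finset V)) := by
  intro S T hST hS
  simp only [dominatingSets, mem_coe, mem_filter_univ] at hS ⊢
  intro v
  obtain ⟨u, hu, huv⟩ := hS v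
  exact ⟨u, hST hu, huv⟩

theorem domCount_eq_card_slice (k : ℕ) : domCount G k = #((dominatingSets G).slice k) := by
  unfold domCount dominatingSets slice
  congr 1
  ext S
  simp [and_comm]

theorem card_closedNbhd (v : V) : #(closedNbhd G v) = G.degree v + 1 := by
  rw [closedNbhd, card_insert_of_notMem (G.notMem_neighborFinset_self v),
    G.card_neighborFinset_eq_degree]

theorem domCount_le_choose (k : ℕ) : domCount G k ≤ (Fintype.card V).choose k := by
  rw [domCount_eq_card_slice]
  exact sized_slice.card_le

theorem domCount_le_domCount_succ {j : ℕ} (hj : 2 * j + 1 ≤ Fintype.card V) :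
    domCount G j ≤ domCount G (j + 1) := by
  simp only [domCount_eq_card_slice]
  refine Nat.le_of_mul_le_mul_right ?_ j.succ_pos
  calc #((dominatingSets G).slice j) * (j + 1)
        ≤ #((dominatingSets G).slice j) * (Fintype.card V - j) := Nat.mul_le_mul_left _ (by omega)
    _ ≤ _ := card_slice_mul_le_card_slice_succ_mul (isUpperSet_dominatingSets G) j

/-- Union bound: a set that fails to dominate avoids the closed neighbourhood of some vertex. -/
theorem choose_le_domCount_add_sum (j : ℕ) :
    (Fintype.card V).choose j ≤
      domCount G j + ∑ v : V, (Fintype.card V - 1 - G.degree v).choose j := by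
  have hcover : powersetCard j univ ⊆ (dominatingSets G).slice j ∪
      univ.biUnion (fun v => powersetCard j (closedNbhd G v)ᶜ) := by
    intro S hS
    rw [mem_powersetCard_univ] at hS
    by_cases hdom : ∀ v : V, ∃ u ∈ S, u ∈ closedNbhd G v
    · exact mem_union_left _ (mem_slice.2 ⟨by simpa [dominatingSets] using hdom, hS⟩)
    · obtain ⟨v, hv⟩ := not_forall.1 hdom
      refine mem_union_right _ (mem_biUnion.2 ⟨v, mem_univ v, mem_powersetCard.2 ⟨?_, hS⟩⟩)
      exact fun u hu => mem_compl.2 fun huv => hv ⟨u, hu, huv⟩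
  calc (Fintype.card V).choose j = #(powersetCard j (univ : Finset V)) := by
        rw [card_powersetCard, card_univ]
    _ ≤ _ := card_le_card hcover
    _ ≤ #((dominatingSets G).slice j) +
          #(univ.biUnion (fun v => powersetCard j (closedNbhd G v)ᶜ)) := card_union_le _ _
    _ ≤ _ := by
        rw [domCount_eq_card_slice]
        refine Nat.add_le_add_left (card_biUnion_le.trans_eq (sum_congr rfl fun v _ => ?_)) _
        rw [card_powersetCard, card_compl, card_closedNbhd, Nat.sub_add_eq, Nat.sub_right_comm]

theorem domCount_succ_le_domCount
    (hσ : ∑ v : V, (2 : ℚ) ^ (-(G.degree v : ℤ) - 1) ≤ 1 / (Fintype.card V + 2))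
    {j : ℕ} (hj : Fintype.card V ≤ 2 * j) :
    domCount G (j + 1) ≤ domCount G j := by
  set n := Fintype.card V
  have hmissed : ∑ v : V, ((n - 1 - G.degree v).choose j : ℚ) ≤ n.choose j / (n + 2) :=
    calc ∑ v : V, ((n - 1 - G.degree v).choose j : ℚ)
        ≤ ∑ v : V, n.choose j * (2 : ℚ) ^ (-(G.degree v : ℤ) - 1) :=
          sum_le_sum fun v _ => choose_sub_degree_le G hj v
      _ = n.choose j * ∑ v : V, (2 : ℚ) ^ (-(G.degree v : ℤ) - 1) := (mul_sum ..).symm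
      _ ≤ n.choose j * (1 / (n + 2)) := mul_le_mul_of_nonneg_left hσ (by positivity)
      _ = n.choose j / (n + 2) := mul_one_div _ _
  have hlower : (n.choose j : ℚ) ≤
      domCount G j + ∑ v : V, ((n - 1 - G.degree v).choose j : ℚ) := by
    exact_mod_cast choose_le_domCount_add_sum G j
  have hpos : (0 : ℚ) < n + 2 := by positivity
  have hupper : (domCount G (j + 1) : ℚ) ≤ n.choose j - n.choose j / (n + 2) := by
    have h1 : (domCount G (j + 1) : ℚ) ≤ n.choose (j + 1) := by
      exact_mod_cast domCount_le_choose G (j + 1)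
    have h2 : ((n + 2) * n.choose (j + 1) : ℚ) ≤ (n + 1) * n.choose j := by
      exact_mod_cast Nat.add_two_mul_choose_succ_le hj
    rw [show (n.choose j : ℚ) - n.choose j / (n + 2) = (n + 1) * n.choose j / (n + 2) by
      field_simp; ring, le_div_iff₀ hpos]
    nlinarith
  have hfinal : (domCount G (j + 1) : ℚ) ≤ domCount G j := by linarith
  exact_mod_cast hfinal

end Domination

theorem sigma_criterion_unimodal_general {V : Type*} [Fintype V] [DecidableEq V]
    (G : SimpleGraph V) [DecidableRel G.Adj]
    (hσ : ∑ v : V, (2 : ℚ) ^ (-(G.degree v : ℤ) - 1) ≤ 1 / (Fintype.card V + 2)) :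
    letI k : ℕ := (Fintype.card V + 1) / 2
    (∀ i j : ℕ, i ≤ j → j ≤ k → domCount G i ≤ domCount G j)
    ∧ (∀ i j : ℕ, k ≤ i → i ≤ j → domCount G j ≤ domCount G i) := by
  have hup : MonotoneOn (domCount G) (Set.Iic ((Fintype.card V + 1) / 2)) :=
    monotoneOn_of_le_succ Set.ordConnected_Iic fun j _ _ hj =>
      domCount_le_domCount_succ G (by rw [Set.mem_Iic, Order.succ_eq_add_one] at hj; omega)
  have hdown : AntitoneOn (domCount G) {j | (Fintype.card V + 1) / 2 ≤ j} :=
    antitoneOn_nat_Ici_of_succ_le fun j hj => domCount_succ_le_domCount G hσ (by omega)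
  exact ⟨fun i j hij hjk => hup (hij.trans hjk) hjk hij,
    fun i j hki hij => hdown hki (hki.trans hij) hij⟩

/-- If `n ≥ 6` and `σ(G) = Σ_v 2^{-deg(v)-1} ≤ 1/(n+2)`, then the domination
sequence of `G` is unimodal with mode `k = ⌈n/2⌉`. -/
theorem sigma_criterion_unimodal {V : Type*} [Fintype V] [DecidableEq V]
    (G : SimpleGraph V) [DecidableRel G.Adj]
    (hn : 6 ≤ Fintype.card V)
    (hσ : ∑ v : V, (2 : ℚ) ^ (-(G.degree v : ℤ) - 1) ≤ 1 / (Fintype.card V + 2)) :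
    letI k : ℕ := (Fintype.card V + 1) / 2
    (∀ i j : ℕ, i ≤ j → j ≤ k → domCount G i ≤ domCount G j)
    ∧ (∀ i j : ℕ, k ≤ i → i ≤ j → domCount G j ≤ domCount G i) :=
  sigma_criterion_unimodal_general G hσ
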